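/- arXiv:2410.09035 — 3 statements merged into one kernel-verified Lean document; each statement's English description precedes it below -/
import Mathlib

section
/- For any differentiable function G : ℝ⁶ → ℝ and any point (v,w) ∈ ℝ³ × ℝ³ with v ≠ w, writing n₀ = (v-w)/|v-w|, n = (1/√2)(n₀, -n₀) ∈ ℝ⁶, and b_k(v-w) = e_k × (v-w) with lifted vectors b̃_k = (b_k, -b_k), the identity |∇G|² = (1/2) Σ_{i=1}^{3} |(∂_{v_i} + ∂_{w_i})G|² + |n · ∇G|² + (1/(2|v-w|²)) Σ_{k=1}^{3} |b̃_k · ∇G|² holds, where ∇G is the full gradient in (v,w). -/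
open Finset

theorem stmt_0 (G : (Fin 3 → ℝ) × (Fin 3 → ℝ) → ℝ) (v w : Fin 3 → ℝ)
    (hG : DifferentiableAt ℝ G (v, w)) (hvw : v ≠ w)
    (gv gw : Fin 3 → ℝ)
    (hgv : ∀ i, gv i = fderiv ℝ G (v, w) (Pi.single i 1, 0))
    (hgw : ∀ i, gw i = fderiv ℝ G (v, w) (0, Pi.single i 1))
    (z n₀ : Fin 3 → ℝ) (hz : z = v - w)
    (hn₀ : ∀ i, n₀ i = z i / Real.sqrt (∑ l : Fin 3, z l ^ 2)) :
    (∑ i : Fin 3, gv i ^ 2) + (∑ i : Fin 3, gw i ^ 2)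
      = (1 / 2) * ∑ i : Fin 3, (gv i + gw i) ^ 2
        + ((1 / Real.sqrt 2) * ∑ i : Fin 3, n₀ i * (gv i - gw i)) ^ 2
        + (1 / (2 * ∑ l : Fin 3, z l ^ 2)) *
            ∑ k : Fin 3, (∑ i : Fin 3, (crossProduct (Pi.single k 1) z) i * (gv i - gw i)) ^ 2 := by
  have hzne : z ≠ 0 := by
    rw [hz]; exact sub_ne_zero.mpr hvw
  obtain ⟨j, hj⟩ : ∃ j, z j ≠ 0 := by
    by_contra h
    push_neg at h
    exact hzne (funext h)
  have hS : (0:ℝ) < ∑ l : Fin 3, z l ^ 2 := by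
    apply Finset.sum_pos' (fun i _ => sq_nonneg _) ⟨j, Finset.mem_univ j, by positivity⟩
  set S : ℝ := ∑ l : Fin 3, z l ^ 2 with hSdef
  have hs : Real.sqrt S ^ 2 = S := Real.sq_sqrt hS.le
  have hsne : Real.sqrt S ≠ 0 := by positivity
  have h2 : Real.sqrt 2 ^ 2 = 2 := Real.sq_sqrt (by norm_num)
  have h2ne : Real.sqrt 2 ≠ 0 := by positivity
  have hmid : ((1 / Real.sqrt 2) * ∑ i : Fin 3, n₀ i * (gv i - gw i)) ^ 2
      = (∑ i : Fin 3, z i * (gv i - gw i)) ^ 2 / (2 * S) := by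
    have : ∑ i : Fin 3, n₀ i * (gv i - gw i)
        = (∑ i : Fin 3, z i * (gv i - gw i)) / Real.sqrt S := by
      rw [Finset.sum_div]
      exact Finset.sum_congr rfl fun i _ => by rw [hn₀ i, div_mul_eq_mul_div]
    rw [this, mul_pow, div_pow, div_pow, h2, hs, one_pow]
    ring
  rw [hmid]
  simp only [Fin.sum_univ_three, crossProduct, Fin.isValue, LinearMap.mk₂_apply]
  simp [Pi.single, Function.update, Matrix.cons_val_zero, Matrix.cons_val_one]
  have hSexp : S = z 0 ^ 2 + z 1 ^ 2 + z 2 ^ 2 := by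
    rw [hSdef, Fin.sum_univ_three]
  field_simp
  rw [hSexp]
  ring
end

section
/- For every nonzero z = v − w ∈ ℝ³, writing n₀ = z/|z| and a(z) = |z|²I₃ − zzᵀ, the following inequality of 6×6 symmetric matrices holds: (1/2)[[I₃, I₃],[I₃, I₃]] + (1/(2|z|²))[[a(z), −a(z)],[−a(z), a(z)]] ≥ (1/|z|²)[[a(z), 0],[0, a(z)]] in the sense of positive semidefinite ordering. -/
/-!
Since `|z|² I - a(z) = z zᵀ`, the difference of the two sides collapses to the rank-one matrix
`(1 / (2|z|²)) (z, z)(z, z)ᵀ`, which is positive semidefinite.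
-/

open Finset Matrix

lemma sum_sq_pos_of_ne_zero {ι : Type*} [Fintype ι] {z : ι → ℝ} (hz : z ≠ 0) :
    0 < ∑ i, z i ^ 2 := by
  obtain ⟨i, hi⟩ := Function.ne_iff.mp hz
  exact sum_pos' (fun i _ => sq_nonneg _) ⟨i, mem_univ i, sq_pos_of_ne_zero hi⟩

lemma vecMulVec_sumElim {l m n o α : Type*} [Mul α] (u : m → α) (v : n → α) (u' : l → α)
    (v' : o → α) :
    vecMulVec (Sum.elim u v) (Sum.elim u' v') =
      fromBlocks (vecMulVec u u') (vecMulVec u v') (vecMulVec v u') (vecMulVec v v') := by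
  ext (i | i) (j | j) <;> rfl

lemma half_fromBlocks_one_add_sub_fromBlocks {n : Type*} [DecidableEq n] {s : ℝ} (hs : s ≠ 0)
    (a : Matrix n n ℝ) :
    (1 / 2 : ℝ) • fromBlocks (1 : Matrix n n ℝ) 1 1 1 + (1 / (2 * s)) • fromBlocks a (-a) (-a) a
        - (1 / s) • fromBlocks a 0 0 a =
      (1 / (2 * s)) • fromBlocks (s • 1 - a) (s • 1 - a) (s • 1 - a) (s • 1 - a) := by
  simp only [fromBlocks_smul, fromBlocks_add, sub_eq_add_neg, fromBlocks_neg]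
  congr 1 <;> match_scalars <;> field_simp <;> ring

theorem stmt_2 (z : Fin 3 → ℝ) (hz : z ≠ 0)
    (a : Matrix (Fin 3) (Fin 3) ℝ)
    (ha : a = (∑ l : Fin 3, z l ^ 2) • (1 : Matrix (Fin 3) (Fin 3) ℝ) - Matrix.vecMulVec z z) :
    Matrix.PosSemidef
      ((1 / 2 : ℝ) • Matrix.fromBlocks (1 : Matrix (Fin 3) (Fin 3) ℝ) 1 1 1
        + (1 / (2 * ∑ l : Fin 3, z l ^ 2)) • Matrix.fromBlocks a (-a) (-a) a
        - (1 / (∑ l : Fin 3, z l ^ 2)) • Matrix.fromBlocks a 0 0 a) := by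
  have hs := sum_sq_pos_of_ne_zero hz
  have hzz : (∑ l : Fin 3, z l ^ 2) • 1 - a = vecMulVec z z := by rw [ha, sub_sub_cancel]
  rw [half_fromBlocks_one_add_sub_fromBlocks hs.ne', hzz, ← vecMulVec_sumElim]
  exact (posSemidef_vecMulVec_self_star _).smul (by positivity)
end

section
/- Let i : [0,T] → ℝ≥0 be a differentiable function and let c, C > 0 be constants such that −i'(t) > (c/2) i(t)² − C for all t ∈ (0,T]. Then for every t ∈ (0,T], i(t) < √(4C/c) + 4/(c t). -/
/-!
The function `B u = √(4C/c) + 4/(c u)` is a strict supersolution of the inequality: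
`-B' < (c/2) B² - C` on `(0, ∞)`. If `B t ≤ i t`, then wherever `i` touches `B` from above on
`(0, t]` it does so with the smaller derivative, so `i` stays above `B` backwards in time on all
of `(0, t]`. But `B` blows up at `0⁺` while `i` is continuous at `0`.
-/

open Set Filter Topology

theorem le_image_of_deriv_lt_deriv_boundary_rev {f f' B B' : ℝ → ℝ} {a b : ℝ}
    (hf : ContinuousOn f (Icc a b)) (hf' : ∀ x ∈ Ioc a b, HasDerivAt f (f' x) x)
    (hB : ContinuousOn B (Icc a b)) (hB' : ∀ x ∈ Ioc a b, HasDerivAt B (B' x) x)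
    (hb : B b ≤ f b) (bound : ∀ x ∈ Ioc a b, f x = B x → f' x < B' x) :
    ∀ ⦃x⦄, x ∈ Icc a b → B x ≤ f x := by
  have hrefl : MapsTo (fun x => a + b - x) (Icc a b) (Icc a b) :=
    fun x hx => ⟨by linarith [hx.2], by linarith [hx.1]⟩
  have hrefl' : ∀ x ∈ Ico a b, a + b - x ∈ Ioc a b :=
    fun x hx => ⟨by linarith [hx.2], by linarith [hx.1]⟩
  have hreflected := image_le_of_deriv_right_lt_deriv_boundary'
    (f := fun x => B (a + b - x)) (f' := fun x => -B' (a + b - x))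
    (B := fun x => f (a + b - x)) (B' := fun x => -f' (a + b - x))
    (hB.comp (continuousOn_const.sub continuousOn_id) hrefl)
    (fun x hx => ((hB' _ (hrefl' x hx)).comp_const_sub (a + b) x).hasDerivWithinAt)
    (by simpa using hb)
    (hf.comp (continuousOn_const.sub continuousOn_id) hrefl)
    (fun x hx => ((hf' _ (hrefl' x hx)).comp_const_sub (a + b) x).hasDerivWithinAt)
    (fun x hx hx' => neg_lt_neg (bound _ (hrefl' x hx) hx'.symm))
  intro x hx
  simpa using hreflected (hrefl hx)

theorem hasDerivAt_const_add_div_mul {a k c u : ℝ} (hc : c ≠ 0) (hu : u ≠ 0) :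
    HasDerivAt (fun u => a + k / (c * u)) (-(k / (c * u ^ 2))) u := by
  have := (hasDerivAt_const u k).div ((hasDerivAt_id' u).const_mul c) (mul_ne_zero hc hu)
  refine (this.const_add a).congr_deriv ?_
  field_simp
  ring

theorem tendsto_const_add_div_mul_nhdsGT_zero {a k c : ℝ} (hk : 0 < k) (hc : 0 < c) :
    Tendsto (fun u => a + k / (c * u)) (𝓝[>] 0) atTop := by
  refine tendsto_atTop_add_const_left _ a ?_
  refine (tendsto_inv_nhdsGT_zero.const_mul_atTop (div_pos hk hc)).congr fun u => ?_
  ring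

theorem four_div_lt_half_mul_sq_sqrt_add_div_sub {c C u : ℝ} (hc : 0 < c) (hu : 0 < u) :
    4 / (c * u ^ 2) < c / 2 * (Real.sqrt (4 * C / c) + 4 / (c * u)) ^ 2 - C := by
  set a := Real.sqrt (4 * C / c)
  set y := 4 / (c * u)
  -- for `C < 0` the square root is `0`, and the bound still holds
  have hC : 4 * C ≤ c * a ^ 2 := by
    have : 4 * C / c ≤ a ^ 2 := Real.sq_sqrt' ▸ le_max_left _ _
    rw [div_le_iff₀ hc] at this
    linarith
  have hy : c / 2 * y ^ 2 = 2 * (4 / (c * u ^ 2)) := by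
    simp only [y]
    field_simp
    ring
  calc 4 / (c * u ^ 2) < c / 2 * y ^ 2 := by
        rw [hy]
        linarith [show 0 < 4 / (c * u ^ 2) by positivity]
    _ ≤ c / 2 * (a + y) ^ 2 - C := by
      have : 0 ≤ c * a * y := by positivity
      nlinarith [mul_nonneg hc.le (sq_nonneg a)]

theorem stmt_8_general (T c C : ℝ) (hc : 0 < c)
    (i : ℝ → ℝ) (hdiff : ∀ t ∈ Set.Icc (0 : ℝ) T, DifferentiableAt ℝ i t)
    (hode : ∀ t ∈ Set.Ioc (0 : ℝ) T, -deriv i t > (c / 2) * i t ^ 2 - C) :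
    ∀ t ∈ Set.Ioc (0 : ℝ) T, i t < Real.sqrt (4 * C / c) + 4 / (c * t) := by
  intro t ht
  set B : ℝ → ℝ := fun u => Real.sqrt (4 * C / c) + 4 / (c * u)
  by_contra! hBt
  have hBi : ∀ u ∈ Ioc 0 t, B u ≤ i u := by
    intro u hu
    have hsub : Icc u t ⊆ Icc 0 T := Icc_subset_Icc hu.1.le ht.2
    have hB' : ∀ x ∈ Icc u t, HasDerivAt B (-(4 / (c * x ^ 2))) x := fun x hx =>
      hasDerivAt_const_add_div_mul hc.ne' (hu.1.trans_le hx.1).ne'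
    refine le_image_of_deriv_lt_deriv_boundary_rev (f' := deriv i)
      (fun x hx => (hdiff x (hsub hx)).continuousAt.continuousWithinAt)
      (fun x hx => (hdiff x (hsub (Ioc_subset_Icc_self hx))).hasDerivAt)
      (fun x hx => (hB' x hx).continuousAt.continuousWithinAt)
      (fun x hx => hB' x (Ioc_subset_Icc_self hx)) hBt ?_ ⟨le_rfl, hu.2⟩
    intro x hx hix
    have hx0 : 0 < x := hu.1.trans hx.1
    have hode_x := hode x ⟨hx0, hx.2.trans ht.2⟩
    rw [hix] at hode_x
    linarith [four_div_lt_half_mul_sq_sqrt_add_div_sub (C := C) hc hx0]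
  have hi_top : Tendsto i (𝓝[>] 0) atTop :=
    tendsto_atTop_mono' _ (eventually_of_mem (Ioc_mem_nhdsGT ht.1) hBi)
      (tendsto_const_add_div_mul_nhdsGT_zero four_pos hc)
  have hi_cont : Tendsto i (𝓝[>] 0) (𝓝 (i 0)) :=
    (hdiff 0 ⟨le_rfl, ht.1.le.trans ht.2⟩).continuousAt.tendsto.mono_left nhdsWithin_le_nhds
  exact not_tendsto_atTop_of_tendsto_nhds hi_cont hi_top

theorem stmt_8 (T c C : ℝ) (hT : 0 < T) (hc : 0 < c) (hC : 0 < C)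
    (i : ℝ → ℝ) (hdiff : ∀ t ∈ Set.Icc (0 : ℝ) T, DifferentiableAt ℝ i t)
    (hnn : ∀ t ∈ Set.Icc (0 : ℝ) T, 0 ≤ i t)
    (hode : ∀ t ∈ Set.Ioc (0 : ℝ) T, -deriv i t > (c / 2) * i t ^ 2 - C) :
    ∀ t ∈ Set.Ioc (0 : ℝ) T, i t < Real.sqrt (4 * C / c) + 4 / (c * t) :=
  stmt_8_general T c C hc i hdiff hode
end
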